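/- For A ∈ R^{m×n} and b ∈ R^m, every local minimizer of the total least squares objective x ↦ ‖Ax − b‖²/(‖x‖² + 1) over R^n is a global minimizer. -/

import Mathlib

/-- The total least squares objective `‖Ax - b‖² / (‖x‖² + 1)`. -/
noncomputable def tlsObj {m n : ℕ} (A : Matrix (Fin m) (Fin n) ℝ) (b : Fin m → ℝ)
    (x : EuclideanSpace ℝ (Fin n)) : ℝ :=
  (∑ i, (∑ j, A i j * x j - b i) ^ 2) / (‖x‖ ^ 2 + 1)

/-!
Restricted to a line `t ↦ x₀ + t • v`, the objective is a ratio `N t / D t` of two quadratics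
with `D > 0`, and `c ≤ N t / D t` is equivalent to `0 ≤ N t - c D t`. With `c` the value at
`t = 0`, this difference is a quadratic vanishing at `0`. Local minimality at `0` forces its
linear coefficient to vanish (Fermat) and its leading coefficient to be nonnegative, so it is
nonnegative on the whole line; hence `x₀` is not beaten at any point `x₀ + v`.
-/

open Filter Topology Set

lemma quadratic_nonneg_of_eventually_nonneg {a b : ℝ}
    (h : ∀ᶠ t in 𝓝 0, 0 ≤ b * t + a * t ^ 2) (t : ℝ) : 0 ≤ b * t + a * t ^ 2 := by
  have hmin : IsLocalMin (fun t : ℝ => b * t + a * t ^ 2) 0 := by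
    simpa [IsLocalMin, IsMinFilter] using h
  have hderiv : HasDerivAt (fun t : ℝ => b * t + a * t ^ 2) b 0 := by
    simpa using
      ((hasDerivAt_id' (0 : ℝ)).const_mul b).fun_add ((hasDerivAt_pow 2 (0 : ℝ)).const_mul a)
  have hb : b = 0 := hmin.hasDerivAt_eq_zero hderiv
  subst hb
  obtain ⟨s, hs, hs0 : s ≠ 0⟩ :=
    ((h.filter_mono nhdsWithin_le_nhds).and (self_mem_nhdsWithin (s := {0}ᶜ))).exists
  have ha : 0 ≤ a := nonneg_of_mul_nonneg_left (by simpa using hs) (by positivity)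
  simpa using mul_nonneg ha (sq_nonneg t)

lemma isMinOn_div_quadratic_of_isLocalMin {n₀ n₁ n₂ d₀ d₁ d₂ : ℝ}
    (hD : ∀ t, 0 < d₀ + d₁ * t + d₂ * t ^ 2)
    (h : IsLocalMin (fun t => (n₀ + n₁ * t + n₂ * t ^ 2) / (d₀ + d₁ * t + d₂ * t ^ 2)) 0) :
    IsMinOn (fun t => (n₀ + n₁ * t + n₂ * t ^ 2) / (d₀ + d₁ * t + d₂ * t ^ 2)) univ 0 := by
  set c := n₀ / d₀
  have hd₀ : 0 < d₀ := by simpa using hD 0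
  have hn₀ : n₀ = c * d₀ := (div_mul_cancel₀ n₀ hd₀.ne').symm
  have hle_iff : ∀ t, c ≤ (n₀ + n₁ * t + n₂ * t ^ 2) / (d₀ + d₁ * t + d₂ * t ^ 2) ↔
      0 ≤ (n₁ - c * d₁) * t + (n₂ - c * d₂) * t ^ 2 := by
    intro t
    rw [le_div_iff₀ (hD t), ← sub_nonneg, hn₀]
    ring_nf
  have hval : (n₀ + n₁ * 0 + n₂ * 0 ^ 2) / (d₀ + d₁ * 0 + d₂ * 0 ^ 2) = c := by simp [c]
  have hnear : ∀ᶠ t in 𝓝 0, 0 ≤ (n₁ - c * d₁) * t + (n₂ - c * d₂) * t ^ 2 :=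
    h.mono fun t ht => (hle_iff t).1 (by simpa [hval] using ht)
  refine isMinOn_univ_iff.2 fun t => ?_
  rw [hval]
  exact (hle_iff t).2 (quadratic_nonneg_of_eventually_nonneg hnear t)

lemma norm_add_smul_sq {E : Type*} [NormedAddCommGroup E] [InnerProductSpace ℝ E]
    (p q : E) (t : ℝ) : ‖p + t • q‖ ^ 2 = ‖p‖ ^ 2 + 2 * inner ℝ p q * t + ‖q‖ ^ 2 * t ^ 2 := by
  rw [norm_add_sq_real, real_inner_smul_right, norm_smul, Real.norm_eq_abs, mul_pow, sq_abs]
  ring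

namespace TotalLeastSquares

variable {E F : Type*} [NormedAddCommGroup E] [InnerProductSpace ℝ E]
  [NormedAddCommGroup F] [InnerProductSpace ℝ F]

noncomputable def objective (L : E →ₗ[ℝ] F) (w : F) (x : E) : ℝ :=
  ‖L x - w‖ ^ 2 / (‖x‖ ^ 2 + 1)

lemma objective_add_smul (L : E →ₗ[ℝ] F) (w : F) (x v : E) (t : ℝ) :
    objective L w (x + t • v) =
      (‖L x - w‖ ^ 2 + 2 * inner ℝ (L x - w) (L v) * t + ‖L v‖ ^ 2 * t ^ 2) /
        ((‖x‖ ^ 2 + 1) + 2 * inner ℝ x v * t + ‖v‖ ^ 2 * t ^ 2) := by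
  have hres : L (x + t • v) - w = (L x - w) + t • L v := by
    rw [map_add, map_smul]; abel
  rw [objective, hres, norm_add_smul_sq, norm_add_smul_sq]
  ring_nf

theorem isMinOn_of_isLocalMin (L : E →ₗ[ℝ] F) (w : F) {x₀ : E}
    (h : IsLocalMin (objective L w) x₀) : IsMinOn (objective L w) univ x₀ := by
  refine isMinOn_univ_iff.2 fun x => ?_
  set v := x - x₀
  have h' : IsLocalMin (objective L w) (x₀ + (0 : ℝ) • v) := by simpa using h
  have hline : IsLocalMin (fun t : ℝ => objective L w (x₀ + t • v)) 0 :=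
    h'.comp_continuous (g := fun t : ℝ => x₀ + t • v) (by fun_prop)
  simp only [objective_add_smul] at hline
  have hmin := isMinOn_univ_iff.1
    (isMinOn_div_quadratic_of_isLocalMin (fun t => ?_) hline) 1
  · beta_reduce at hmin
    rw [← objective_add_smul, ← objective_add_smul] at hmin
    simpa [v] using hmin
  · linarith [sq_nonneg ‖x₀ + t • v‖, norm_add_smul_sq x₀ v t]

end TotalLeastSquares

lemma tlsObj_eq_objective {m n : ℕ} (A : Matrix (Fin m) (Fin n) ℝ) (b : Fin m → ℝ) :
    tlsObj A b = TotalLeastSquares.objective (Matrix.toLpLin 2 2 A) (WithLp.toLp 2 b) := by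
  ext x
  simp [tlsObj, TotalLeastSquares.objective, EuclideanSpace.real_norm_sq_eq, Matrix.toLpLin_apply,
    Matrix.mulVec, dotProduct]

theorem stmt8 {m n : ℕ} (A : Matrix (Fin m) (Fin n) ℝ) (b : Fin m → ℝ)
    (xs : EuclideanSpace ℝ (Fin n))
    (hloc : ∃ ε > 0, ∀ x : EuclideanSpace ℝ (Fin n), ‖x - xs‖ < ε →
      tlsObj A b xs ≤ tlsObj A b x) :
    ∀ x : EuclideanSpace ℝ (Fin n), tlsObj A b xs ≤ tlsObj A b x := by
  obtain ⟨ε, hε, hmin⟩ := hloc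
  have hlocal : IsLocalMin (tlsObj A b) xs :=
    Metric.eventually_nhds_iff.2 ⟨ε, hε, fun x hx => hmin x (by rwa [dist_eq_norm] at hx)⟩
  rw [tlsObj_eq_objective] at hlocal ⊢
  exact isMinOn_univ_iff.1 (TotalLeastSquares.isMinOn_of_isLocalMin _ _ hlocal)
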